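/- Let l be a positive integer. Then for every integer μ ≥ 2 one has k_{μ,l} ≥ (2^{2l+b} / π^{a+b}) · ∫_0^{π/2} t^{a+b-2l} (sin(μ t/2))^{2l} dt. -/

import Mathlib

/-!
On `(0, π/2)` Jordan's inequality gives `sin (t/2) ≥ t/π` and `sin t ≥ 2t/π`, while
`sin (t/2) ≤ t/2`; hence `α(t) / sin(t/2)^(2l) ≥ (2^(2l+b) / π^(a+b)) t^(a+b-2l)`, and
multiplying by `sin(μt/2)^(2l) ≥ 0` bounds the integrand of `k_{μ,l}` from below on
`(0, π/2)`. Since that integrand is nonnegative (and bounded, so integrable) on `(0, π)`,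
its integral over `(0, π)` dominates the one over `(0, π/2)`.
-/

open MeasureTheory Real Set

lemma div_pi_le_sin_half {t : ℝ} (h0 : 0 ≤ t) (hle : t ≤ π) : t / π ≤ sin (t / 2) :=
  calc t / π = 2 / π * (t / 2) := by ring
    _ ≤ sin (t / 2) := mul_le_sin (by positivity) (by linarith)

lemma sin_half_pos {t : ℝ} (ht : t ∈ Ioo 0 π) : 0 < sin (t / 2) :=
  sin_pos_of_pos_of_lt_pi (by linarith [ht.1]) (by linarith [ht.2, pi_pos])

lemma abs_sin_mul_half_div_sin_half_le {x t : ℝ} (hx : 0 ≤ x) (ht : t ∈ Ioo 0 π) :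
    |sin (x * t / 2) / sin (t / 2)| ≤ x * π / 2 := by
  have hp := sin_half_pos ht
  rw [abs_div, abs_of_pos hp, div_le_iff₀ hp]
  calc |sin (x * t / 2)| ≤ x * t / 2 :=
        abs_sin_le_abs.trans (abs_of_nonneg (by nlinarith [ht.1])).le
    _ = x * π / 2 * (t / π) := by field_simp
    _ ≤ x * π / 2 * sin (t / 2) :=
        mul_le_mul_of_nonneg_left (div_pi_le_sin_half ht.1.le ht.2.le) (by positivity)

lemma integrableOn_sin_ratio_pow_mul_sin_pow (x : ℝ) (hx : 0 ≤ x) (n a b : ℕ) :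
    IntegrableOn (fun t => (sin (x * t / 2) / sin (t / 2)) ^ n * (sin (t / 2) ^ a * sin t ^ b))
      (Ioo 0 π) := by
  refine Measure.integrableOn_of_bounded (M := (x * π / 2) ^ n) measure_Ioo_lt_top.ne
    (by fun_prop) ((ae_restrict_iff' measurableSet_Ioo).2 (.of_forall fun t ht => ?_))
  have hα : |sin (t / 2) ^ a * sin t ^ b| ≤ 1 := by
    rw [abs_mul, abs_pow, abs_pow]
    exact mul_le_one₀ (pow_le_one₀ (abs_nonneg _) (abs_sin_le_one _)) (by positivity)
      (pow_le_one₀ (abs_nonneg _) (abs_sin_le_one _))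
  calc ‖(sin (x * t / 2) / sin (t / 2)) ^ n * (sin (t / 2) ^ a * sin t ^ b)‖
      = |sin (x * t / 2) / sin (t / 2)| ^ n * |sin (t / 2) ^ a * sin t ^ b| := by
        rw [norm_eq_abs, abs_mul, abs_pow]
    _ ≤ (x * π / 2) ^ n * 1 :=
        mul_le_mul (pow_le_pow_left₀ (abs_nonneg _) (abs_sin_mul_half_div_sin_half_le hx ht) _)
          hα (abs_nonneg _) (by positivity)
    _ = (x * π / 2) ^ n := mul_one _

lemma sin_ratio_pow_mul_sin_pow_nonneg (y : ℝ) (l a b : ℕ) {t : ℝ} (ht : t ∈ Ioo 0 π) :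
    0 ≤ (y / sin (t / 2)) ^ (2 * l) * (sin (t / 2) ^ a * sin t ^ b) := by
  have := sin_half_pos ht
  have := sin_pos_of_pos_of_lt_pi ht.1 ht.2
  have := (even_two_mul l).pow_nonneg (y / sin (t / 2))
  positivity

lemma mul_zpow_le_sin_pow_div_sin_half_pow (a b n : ℕ) {t : ℝ} (h0 : 0 < t) (h : t ≤ π / 2) :
    2 ^ (n + b) / π ^ (a + b) * t ^ ((a : ℤ) + b - n) ≤
      sin (t / 2) ^ a * sin t ^ b / sin (t / 2) ^ n := by
  have hp : 0 < sin (t / 2) := sin_half_pos ⟨h0, by linarith⟩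
  have hq : 0 < sin t := sin_pos_of_pos_of_lt_pi h0 (by linarith)
  have hzpow : t ^ ((a : ℤ) + b - n) = t ^ (a + b) / t ^ n := by
    rw [← zpow_natCast, ← zpow_natCast, ← zpow_sub₀ h0.ne']
    push_cast
    rfl
  calc 2 ^ (n + b) / π ^ (a + b) * t ^ ((a : ℤ) + b - n)
      = (t / π) ^ a * (2 / π * t) ^ b / (t / 2) ^ n := by
        rw [hzpow, div_pow, mul_pow, div_pow, div_pow, pow_add, pow_add, pow_add]
        field_simp
    _ ≤ sin (t / 2) ^ a * sin t ^ b / sin (t / 2) ^ n := by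
        have := div_pi_le_sin_half h0.le (by linarith)
        have := mul_le_sin h0.le h
        have := sin_le (x := t / 2) (by positivity)
        gcongr

theorem stmt_2_general (a b : ℕ) (l : ℕ) :
    ∀ μ : ℕ, 2 ≤ μ →
      (2 ^ (2 * l + b) / π ^ (a + b)) *
          (∫ t in Set.Ioo (0 : ℝ) (π / 2),
            t ^ ((a : ℤ) + b - 2 * l) * (Real.sin (μ * t / 2)) ^ (2 * l))
        ≤ ∫ t in Set.Ioo (0 : ℝ) π,
            (Real.sin (μ * t / 2) / Real.sin (t / 2)) ^ (2 * l) *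
              ((Real.sin (t / 2)) ^ a * (Real.sin t) ^ b) := by
  intro μ _
  have hπ := pi_pos
  have hsub : Ioo 0 (π / 2) ⊆ Ioo 0 π := Ioo_subset_Ioo le_rfl (by linarith)
  have hint := integrableOn_sin_ratio_pow_mul_sin_pow μ μ.cast_nonneg (2 * l) a b
  rw [← integral_const_mul]
  refine le_trans (integral_mono_of_nonneg ?_ (hint.mono_set hsub) ?_) ?_
  · refine (ae_restrict_iff' measurableSet_Ioo).2 (.of_forall fun t ht => ?_)
    have := (even_two_mul l).pow_nonneg (sin (μ * t / 2))
    have := ht.1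
    positivity
  · refine (ae_restrict_iff' measurableSet_Ioo).2 (.of_forall fun t ht => ?_)
    have hbound := mul_zpow_le_sin_pow_div_sin_half_pow a b (2 * l) ht.1 ht.2.le
    push_cast at hbound
    calc _ = sin (μ * t / 2) ^ (2 * l) *
          (2 ^ (2 * l + b) / π ^ (a + b) * t ^ ((a : ℤ) + b - 2 * l)) := by ring
      _ ≤ sin (μ * t / 2) ^ (2 * l) * (sin (t / 2) ^ a * sin t ^ b / sin (t / 2) ^ (2 * l)) :=
          mul_le_mul_of_nonneg_left hbound ((even_two_mul l).pow_nonneg _)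
      _ = _ := by simp only [div_pow]; ring
  · exact setIntegral_mono_set hint
      ((ae_restrict_iff' measurableSet_Ioo).2 (.of_forall fun t ht =>
        sin_ratio_pow_mul_sin_pow_nonneg _ l a b ht))
      (.of_forall hsub)

/-- With `m = a + b + 1`, `α(t) = sin(t/2)^a (sin t)^b` and
`D_{μ,l}(t) = (sin(μt/2)/sin(t/2))^(2l)`, for every integer `μ ≥ 2` the normalizing
constant `k_{μ,l} = ∫_0^π D_{μ,l}(t) α(t) dt` satisfies
`k_{μ,l} ≥ (2^(2l+b) / π^(a+b)) · ∫_0^{π/2} t^(a+b-2l) (sin(μt/2))^(2l) dt`. -/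
theorem stmt_2 (a b : ℕ) (m : ℕ) (hm : m = a + b + 1) (l : ℕ) (hl : 1 ≤ l) :
    ∀ μ : ℕ, 2 ≤ μ →
      (2 ^ (2 * l + b) / π ^ (a + b)) *
          (∫ t in Set.Ioo (0 : ℝ) (π / 2),
            t ^ ((a : ℤ) + b - 2 * l) * (Real.sin (μ * t / 2)) ^ (2 * l))
        ≤ ∫ t in Set.Ioo (0 : ℝ) π,
            (Real.sin (μ * t / 2) / Real.sin (t / 2)) ^ (2 * l) *
              ((Real.sin (t / 2)) ^ a * (Real.sin t) ^ b) :=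
  stmt_2_general a b l
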